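/- arXiv:math/0401077 — 2 statements merged into one kernel-verified Lean document; each statement's English description precedes it below -/
import Mathlib

section
/- Let S be a standard symbol, i.e., a pair of strictly increasing sequences β = (β₁ < ... < β_{a₂}) and γ = (γ₁ < ... < γ_{a₁}) of positive integers with a₁ ≤ a₂ and β_k ≤ γ_k for all k ≤ a₁. Then the map ψ : {γ₁,...,γ_{a₁}} → {β₁,...,β_{a₂}} defined by γ⁰ = γ ∩ β and γ^l = {j ∈ γ \ (γ⁰ ∪ ... ∪ γ^{l-1}) : j - l ∈ β \ ψ(γ⁰ ∪ ... ∪ γ^{l-1})} with ψ(j) = j - l for j ∈ γ^l, is a well-defined injection satisfying ψ(j) ≤ j for all j ∈ γ. -/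
open Finset

/-- Auxiliary data for Lusztig's construction: given rows `β` (top) and `γ` (bottom),
`glevAux β γ l = (assigned, used)` where `assigned` is the set of elements of `γ`
lying in `γ⁰ ∪ ⋯ ∪ γ^l` and `used` is the set of their images under `ψ`. -/
def glevAux (β γ : Finset ℕ) : ℕ → Finset ℕ × Finset ℕ
  | 0 => (γ ∩ β, γ ∩ β)
  | l + 1 =>
      let p := glevAux β γ l
      let new := (γ \ p.1).filter (fun j => l + 1 ≤ j ∧ j - (l + 1) ∈ β \ p.2)
      (p.1 ∪ new, p.2 ∪ new.image (fun j => j - (l + 1)))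

/-- The set `γ^l` of Lusztig's construction. -/
def glev (β γ : Finset ℕ) : ℕ → Finset ℕ
  | 0 => γ ∩ β
  | l + 1 =>
      let p := glevAux β γ l
      (γ \ p.1).filter (fun j => l + 1 ≤ j ∧ j - (l + 1) ∈ β \ p.2)

/-- The level of `j`: the `l` such that `j ∈ γ^l` (defaulting to `0`). -/
def lusLevel (β γ : Finset ℕ) (j : ℕ) : ℕ :=
  ((List.range (j + 1)).find? (fun l => decide (j ∈ glev β γ l))).getD 0

/-- Lusztig's injection `ψ : γ → β`, `ψ(j) = j - l` for `j ∈ γ^l`. -/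
def lusPsi (β γ : Finset ℕ) (j : ℕ) : ℕ := j - lusLevel β γ j

/-- The pairs of the standard symbol, recorded by their sources:
the set of `j ∈ γ` with `ψ(j) ≠ j`. -/
def lusPairs (β γ : Finset ℕ) : Finset ℕ := γ.filter (fun j => lusPsi β γ j ≠ j)

/-- Swapping the subset `P` of pairs of the standard symbol `(β, γ)`:
each `j ∈ P` moves to the top row and `ψ(j)` moves to the bottom row.
The result is `(top row, bottom row)`. -/
def swapSymbol (β γ : Finset ℕ) (P : Finset ℕ) : Finset ℕ × Finset ℕ :=
  ((β \ P.image (lusPsi β γ)) ∪ P, (γ \ P) ∪ P.image (lusPsi β γ))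

/-- The set `𝒞(S)` of symbols obtained from the standard symbol `S = (β, γ)`
by swapping subsets of its pairs. -/
def Cset (β γ : Finset ℕ) : Finset (Finset ℕ × Finset ℕ) :=
  (lusPairs β γ).powerset.image (swapSymbol β γ)

/-- A standard symbol: top row `β`, bottom row `γ`, both consisting of positive
integers, with `γ` no longer than `β` and the top row entrywise `≤` the bottom row. -/
def IsStandardSymbol (β γ : Finset ℕ) : Prop :=
  0 ∉ β ∧ 0 ∉ γ ∧ γ.card ≤ β.card ∧
    ∀ k < γ.card, (β.sort (· ≤ ·)).getD k 0 ≤ (γ.sort (· ≤ ·)).getD k 0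

/-- The multisegment `𝐦(λ, a) = Σ_k [k, k + λ_k − 1]` (segments as pairs of
endpoints, 1-indexed rows, empty segments discarded). -/
def mseg (a : ℕ) (l : Fin a → ℕ) : Multiset (ℕ × ℕ) :=
  (Finset.univ.filter (fun k : Fin a => 0 < l k)).val.map
    (fun k => (k.val + 1, k.val + l k))

/-- The multisegment attached to one row of a symbol: the row `β` corresponds to
`λ_k = β_k − k`, giving the segments `[k, β_k − 1]` for those `k` with `β_k > k`. -/
def msegRow (β : Finset ℕ) : Multiset (ℕ × ℕ) :=
  ↑(((List.range β.card).filter (fun k => k + 1 < (β.sort (· ≤ ·)).getD k 0)).map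
      (fun k => (k + 1, (β.sort (· ≤ ·)).getD k 0 - 1)))

/-- The multisegment `𝐦(S)` of a symbol `S = (top, bottom)`. -/
def msegSym (S : Finset ℕ × Finset ℕ) : Multiset (ℕ × ℕ) :=
  msegRow S.1 + msegRow S.2

/-- The total size of a multisegment: the sum of the lengths of its segments. -/
def msize (m : Multiset (ℕ × ℕ)) : ℕ := (m.map (fun s => s.2 + 1 - s.1)).sum

/-- `N_m(λ, a)`: the number of cells of the filled Young diagram of `(λ, a)`
containing the integer `m`; row `k` is filled with `k, k+1, …, k + λ_k − 1`. -/
def Ncells (a : ℕ) (l : Fin a → ℕ) (m : ℕ) : ℕ :=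
  ∑ k : Fin a, ((Finset.range (l k)).filter (fun c => k.val + 1 + c = m)).card

/-- `n(S, Σ)`: the number of pairs of the standard symbol `S = (β, γ)` swapped to
obtain `Σ` (the subset being unique, we sum the cardinalities of all matching subsets). -/
def nswap (β γ : Finset ℕ) (T : Finset ℕ × Finset ℕ) : ℕ :=
  ((lusPairs β γ).powerset.filter (fun P => swapSymbol β γ P = T)).sum Finset.card

/-!
Levels are disjoint by construction, and `ψ(j) = j - l` is injective because a value used at some
level is never available again at a later one. The real content is that every `j ∈ γ` receives a
level. If it did not, then each `b ∈ β` with `b ≤ j` would have been used already when `j` was a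
candidate at level `j - b`; and `b` is the image of some `j' ∈ γ` with `j' < j`, since an image
`j' - l ≤ j` with `j' > j` would have been used at the earlier level `l - (j' - j)`, where `j` was a
candidate. Hence `#{b ∈ β | b ≤ j} ≤ #{g ∈ γ | g < j} < #{g ∈ γ | g ≤ j}`, contradicting the
dominance `β_k ≤ γ_k`, which gives the opposite inequality.
-/

section SortedCount

variable {α : Type*} [LinearOrder α]

theorem List.Pairwise.getD_le_of_lt_length_filter {M : List α} (hM : M.Pairwise (· ≤ ·))
    {x d : α} {i : ℕ} (hi : i < (M.filter (· ≤ x)).length) : M.getD i d ≤ x := by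
  induction M generalizing i with
  | nil => simp at hi
  | cons a t ih =>
    by_cases hax : a ≤ x
    · rw [List.filter_cons_of_pos (by simpa using hax)] at hi
      cases i with
      | zero => simpa using hax
      | succ i => exact ih hM.of_cons (by simpa using hi)
    · have ht : t.filter (· ≤ x) = [] :=
        List.filter_eq_nil_iff.mpr fun b hb => by
          simpa using lt_of_lt_of_le (not_le.mp hax) ((List.pairwise_cons.mp hM).1 b hb)
      rw [List.filter_cons_of_neg (by simpa using hax), ht] at hi
      simp at hi

namespace Finset

theorem length_filter_sort (s : Finset α) (p : α → Prop) [DecidablePred p] :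
    ((s.sort (· ≤ ·)).filter (p ·)).length = #{y ∈ s | p y} := by
  rw [← Multiset.coe_card, ← Multiset.filter_coe, sort_eq]
  rfl

theorem sort_getD_le_of_lt_card_filter (s : Finset α) {x d : α} {i : ℕ}
    (hi : i < #{y ∈ s | y ≤ x}) : (s.sort (· ≤ ·)).getD i d ≤ x :=
  (pairwise_sort s _).getD_le_of_lt_length_filter (by rwa [length_filter_sort])

theorem le_card_filter_of_sort_getD_le (s : Finset α) {x d : α} {k : ℕ} (hk : k ≤ #s)
    (hle : ∀ i < k, (s.sort (· ≤ ·)).getD i d ≤ x) : k ≤ #{y ∈ s | y ≤ x} := by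
  classical
  set L := (s.sort (· ≤ ·)).take k
  have hL : L.toFinset ⊆ {y ∈ s | y ≤ x} := by
    intro y hy
    obtain ⟨i, hi, rfl⟩ := List.mem_take_iff_getElem.mp (List.mem_toFinset.mp hy)
    have hik : i < (s.sort (· ≤ ·)).length := by simp; omega
    refine mem_filter.mpr ⟨(mem_sort _).mp (List.getElem_mem _), ?_⟩
    have hy := hle i (by omega)
    rwa [List.getD_eq_getElem _ d hik] at hy
  calc k = L.toFinset.card := by
          rw [List.toFinset_card_of_nodup ((sort_nodup s _).sublist (List.take_sublist _ _))]
          simp; omega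
    _ ≤ _ := card_le_card hL

end Finset

end SortedCount

theorem IsStandardSymbol.card_filter_le {β γ : Finset ℕ} (h : IsStandardSymbol β γ) (x : ℕ) :
    #{g ∈ γ | g ≤ x} ≤ #{b ∈ β | b ≤ x} := by
  obtain ⟨-, -, hcard, hdom⟩ := h
  have hγ : #{g ∈ γ | g ≤ x} ≤ #γ := Finset.card_filter_le _ _
  refine β.le_card_filter_of_sort_getD_le (d := 0) (by omega) fun i hi => ?_
  exact (hdom i (by omega)).trans (γ.sort_getD_le_of_lt_card_filter hi)

section Levels

variable (β γ : Finset ℕ)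

theorem mem_glev_succ {j l : ℕ} :
    j ∈ glev β γ (l + 1) ↔
      j ∈ γ ∧ j ∉ (glevAux β γ l).1 ∧ l + 1 ≤ j ∧
        j - (l + 1) ∈ β ∧ j - (l + 1) ∉ (glevAux β γ l).2 := by
  simp [glev, and_assoc]

theorem mem_glevAux_fst_iff {j l : ℕ} :
    j ∈ (glevAux β γ l).1 ↔ ∃ m ≤ l, j ∈ glev β γ m := by
  induction l with
  | zero => simp [glevAux, glev]
  | succ l ih =>
    change j ∈ (glevAux β γ l).1 ∪ glev β γ (l + 1) ↔ _
    rw [mem_union, ih]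
    constructor
    · rintro (⟨m, hm, hj⟩ | hj)
      exacts [⟨m, by omega, hj⟩, ⟨l + 1, le_rfl, hj⟩]
    · rintro ⟨m, hm, hj⟩
      rcases hm.lt_or_eq with hm | rfl
      exacts [Or.inl ⟨m, by omega, hj⟩, Or.inr hj]

theorem mem_glevAux_snd_iff {u l : ℕ} :
    u ∈ (glevAux β γ l).2 ↔ ∃ m ≤ l, ∃ j ∈ glev β γ m, j - m = u := by
  induction l with
  | zero => simp [glevAux, glev]
  | succ l ih =>
    change u ∈ (glevAux β γ l).2 ∪ (glev β γ (l + 1)).image (· - (l + 1)) ↔ _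
    rw [mem_union, ih, mem_image]
    constructor
    · rintro (⟨m, hm, hj⟩ | hj)
      exacts [⟨m, by omega, hj⟩, ⟨l + 1, le_rfl, hj⟩]
    · rintro ⟨m, hm, hj⟩
      rcases hm.lt_or_eq with hm | rfl
      exacts [Or.inl ⟨m, by omega, hj⟩, Or.inr hj]

theorem glevAux_snd_mono : Monotone fun l => (glevAux β γ l).2 := by
  intro l l' hl u hu
  obtain ⟨m, hm, hj⟩ := (mem_glevAux_snd_iff β γ).mp hu
  exact (mem_glevAux_snd_iff β γ).mpr ⟨m, hm.trans hl, hj⟩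

variable {β γ}

theorem le_of_mem_glev {j l : ℕ} (hj : j ∈ glev β γ l) : l ≤ j := by
  cases l with
  | zero => exact Nat.zero_le _
  | succ l => exact ((mem_glev_succ β γ).mp hj).2.2.1

theorem mem_of_mem_glev {j l : ℕ} (hj : j ∈ glev β γ l) : j ∈ γ ∧ j - l ∈ β := by
  cases l with
  | zero => simpa [glev] using hj
  | succ l => exact ⟨((mem_glev_succ β γ).mp hj).1, ((mem_glev_succ β γ).mp hj).2.2.2.1⟩

theorem glev_eq_of_mem {j l m : ℕ} (hl : j ∈ glev β γ l) (hm : j ∈ glev β γ m) : l = m := by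
  have key : ∀ {l m}, j ∈ glev β γ l → j ∈ glev β γ m → ¬l < m := by
    intro l m hl hm hlm
    obtain ⟨m, rfl⟩ : ∃ m', m = m' + 1 := ⟨m - 1, by omega⟩
    exact ((mem_glev_succ β γ).mp hm).2.1
      ((mem_glevAux_fst_iff β γ).mpr ⟨l, by omega, hl⟩)
  exact le_antisymm (not_lt.mp (key hm hl)) (not_lt.mp (key hl hm))

theorem lusLevel_eq_of_mem_glev {j l : ℕ} (hj : j ∈ glev β γ l) : lusLevel β γ j = l := by
  unfold lusLevel
  rcases hfind : (List.range (j + 1)).find? (fun l => decide (j ∈ glev β γ l)) with _ | m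
  · have hl : l ∈ List.range (j + 1) := List.mem_range.mpr (Nat.lt_succ_of_le (le_of_mem_glev hj))
    simpa [hj] using List.find?_eq_none.mp hfind l hl
  · exact glev_eq_of_mem (by simpa using List.find?_some hfind) hj

theorem lusPsi_eq_of_mem_glev {j l : ℕ} (hj : j ∈ glev β γ l) : lusPsi β γ j = j - l := by
  rw [lusPsi, lusLevel_eq_of_mem_glev hj]

theorem eq_of_mem_glev_of_sub_eq {j₁ j₂ l₁ l₂ : ℕ} (h₁ : j₁ ∈ glev β γ l₁)
    (h₂ : j₂ ∈ glev β γ l₂) (heq : j₁ - l₁ = j₂ - l₂) : j₁ = j₂ := by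
  have key : ∀ {j₁ j₂ l₁ l₂}, j₁ ∈ glev β γ l₁ → j₂ ∈ glev β γ l₂ → j₁ - l₁ = j₂ - l₂ →
      ¬l₁ < l₂ := by
    intro j₁ j₂ l₁ l₂ h₁ h₂ heq hlt
    obtain ⟨m, rfl⟩ : ∃ m, l₂ = m + 1 := ⟨l₂ - 1, by omega⟩
    exact ((mem_glev_succ β γ).mp h₂).2.2.2.2
      ((mem_glevAux_snd_iff β γ).mpr ⟨l₁, by omega, j₁, h₁, heq⟩)
  have hl : l₁ = l₂ := le_antisymm (not_lt.mp (key h₂ h₁ heq.symm)) (not_lt.mp (key h₁ h₂ heq))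
  have := le_of_mem_glev h₁
  have := le_of_mem_glev h₂
  omega

end Levels

section Exists

variable {β γ : Finset ℕ} {j : ℕ}

theorem sub_mem_glevAux_snd_of_forall_not_mem_glev (hj : j ∈ γ) (hna : ∀ l, j ∉ glev β γ l)
    {l : ℕ} (hl : l ≤ j) (hb : j - l ∈ β) : j - l ∈ (glevAux β γ l).2 := by
  cases l with
  | zero => exact absurd (by simpa [glev] using ⟨hj, hb⟩) (hna 0)
  | succ m =>
    by_contra hnot
    refine hna (m + 1) ((mem_glev_succ β γ).mpr ⟨hj, fun hA => ?_, hl, hb, fun hU => ?_⟩)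
    · obtain ⟨m', -, hj'⟩ := (mem_glevAux_fst_iff β γ).mp hA
      exact hna m' hj'
    · exact hnot (glevAux_snd_mono β γ m.le_succ hU)

theorem le_of_mem_glev_of_forall_not_mem_glev (hj : j ∈ γ) (hna : ∀ l, j ∉ glev β γ l)
    {j' l : ℕ} (hj' : j' ∈ glev β γ l) (hle : j' - l ≤ j) : j' ≤ j := by
  by_contra! hlt
  cases l with
  | zero => omega
  | succ m =>
    obtain ⟨-, -, hml, hb, hU⟩ := (mem_glev_succ β γ).mp hj'
    -- at the earlier level `m + 1 - (j' - j)`, the candidate `j` had the same image as `j'`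
    have hsub : j - (m + 1 - (j' - j)) = j' - (m + 1) := by omega
    have h := sub_mem_glevAux_snd_of_forall_not_mem_glev hj hna (l := m + 1 - (j' - j))
      (by omega) (hsub ▸ hb)
    exact hU (glevAux_snd_mono β γ (by omega) (hsub ▸ h))

theorem filter_le_subset_image_lusPsi (hj : j ∈ γ) (hna : ∀ l, j ∉ glev β γ l) :
    {b ∈ β | b ≤ j} ⊆ ({g ∈ γ | g ≤ j}.erase j).image (lusPsi β γ) := by
  intro b hb
  obtain ⟨hbβ, hbj⟩ := mem_filter.mp hb
  have hused := sub_mem_glevAux_snd_of_forall_not_mem_glev hj hna (Nat.sub_le j b)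
    (by rwa [Nat.sub_sub_self hbj])
  obtain ⟨l, -, j', hj', hb'⟩ := (mem_glevAux_snd_iff β γ).mp hused
  have hj'j : j' ≤ j := le_of_mem_glev_of_forall_not_mem_glev hj hna hj' (by omega)
  refine mem_image.mpr ⟨j', mem_erase.mpr ⟨?_, mem_filter.mpr ⟨(mem_of_mem_glev hj').1, hj'j⟩⟩, ?_⟩
  · rintro rfl
    exact hna l hj'
  · rw [lusPsi_eq_of_mem_glev hj', hb']
    omega

theorem IsStandardSymbol.exists_mem_glev (h : IsStandardSymbol β γ) (hj : j ∈ γ) :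
    ∃ l, j ∈ glev β γ l := by
  by_contra! hna
  refine lt_irrefl #{b ∈ β | b ≤ j} ?_
  calc #{b ∈ β | b ≤ j}
      ≤ #(({g ∈ γ | g ≤ j}.erase j).image (lusPsi β γ)) :=
        card_le_card (filter_le_subset_image_lusPsi hj hna)
    _ ≤ #({g ∈ γ | g ≤ j}.erase j) := card_image_le
    _ < #{g ∈ γ | g ≤ j} := card_erase_lt_of_mem (mem_filter.mpr ⟨hj, le_rfl⟩)
    _ ≤ #{b ∈ β | b ≤ j} := h.card_filter_le j

end Exists

/-- For a standard symbol, Lusztig's `ψ` is a well-defined injection from the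
bottom row `γ` into the top row `β` with `ψ(j) ≤ j` for all `j ∈ γ`. -/
theorem lusPsi_welldefined_injection (β γ : Finset ℕ) (h : IsStandardSymbol β γ) :
    (∀ j ∈ γ, ∃ l, j ∈ glev β γ l) ∧
    (∀ j ∈ γ, lusPsi β γ j ∈ β ∧ lusPsi β γ j ≤ j) ∧
    Set.InjOn (lusPsi β γ) ↑γ := by
  refine ⟨fun j => h.exists_mem_glev, fun j hj => ?_, fun j₁ hj₁ j₂ hj₂ heq => ?_⟩
  · obtain ⟨l, hl⟩ := h.exists_mem_glev hj
    rw [lusPsi_eq_of_mem_glev hl]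
    exact ⟨(mem_of_mem_glev hl).2, Nat.sub_le j l⟩
  · obtain ⟨l₁, hl₁⟩ := h.exists_mem_glev hj₁
    obtain ⟨l₂, hl₂⟩ := h.exists_mem_glev hj₂
    rw [lusPsi_eq_of_mem_glev hl₁, lusPsi_eq_of_mem_glev hl₂] at heq
    exact eq_of_mem_glev_of_sub_eq hl₁ hl₂ heq
end

section
/- Let S be a standard symbol with injection ψ as in Lusztig's construction, and let p be the number of elements j of the bottom row γ with ψ(j) ≠ j (equivalently, the number of pairs of S). Then the set 𝒞(S) of symbols obtained from S by permuting (swapping the two entries of) an arbitrary subset of the pairs of S and reordering each row increasingly has cardinality exactly 2^p. -/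
open Finset

lemma lusLevel_eq_zero_of_mem_inter (β γ : Finset ℕ) {j : ℕ} (hj : j ∈ γ ∩ β) :
    lusLevel β γ j = 0 := by
  unfold lusLevel
  rw [List.range_succ_eq_map]
  have : j ∈ glev β γ 0 := hj
  simp [List.find?, this]

lemma lusPairs_not_mem_beta (β γ : Finset ℕ) {j : ℕ} (hj : j ∈ lusPairs β γ) : j ∉ β := by
  intro hb
  rw [lusPairs, Finset.mem_filter] at hj
  exact hj.2 (by
    rw [lusPsi, lusLevel_eq_zero_of_mem_inter β γ (Finset.mem_inter.2 ⟨hj.1, hb⟩)]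
    simp)

lemma swapSymbol_fst_sdiff (β γ : Finset ℕ) {P : Finset ℕ} (hP : P ⊆ lusPairs β γ) :
    (swapSymbol β γ P).1 \ β = P := by
  ext a
  simp only [swapSymbol, Finset.mem_sdiff, Finset.mem_union]
  constructor
  · rintro ⟨h1 | h1, h2⟩
    · exact absurd h1.1 h2
    · exact h1
  · intro ha
    exact ⟨Or.inr ha, lusPairs_not_mem_beta β γ (hP ha)⟩

/-- For a standard symbol `S` with `p` pairs, the set `𝒞(S)` has cardinality `2^p`. -/
theorem card_Cset (β γ : Finset ℕ) (h : IsStandardSymbol β γ) :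
    (Cset β γ).card = 2 ^ (lusPairs β γ).card := by
  rw [Cset, Finset.card_image_of_injOn, Finset.card_powerset]
  intro P hP Q hQ hPQ
  rw [Finset.mem_coe, Finset.mem_powerset] at hP hQ
  have := congrArg (fun T : Finset ℕ × Finset ℕ => T.1 \ β) hPQ
  simpa [swapSymbol_fst_sdiff β γ hP, swapSymbol_fst_sdiff β γ hQ] using this
end
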